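/- After an incremental edge update on (u,v), every shortest path π from s to b in G' is of exactly one of two types: (i) π is also a shortest path from s to b in G (and uses no new weight of (u,v)); or (ii) π contains the edge (u,v), i.e., π has the form s ⇝ u → v ⇝ b, where the prefix s ⇝ u is a shortest path from s to u in G and the suffix v ⇝ b is a shortest path from v to b in G. -/

import Mathlib

open scoped ENNReal

namespace BC

variable {V : Type*}

/-- `p` is a path from `s` to `t` in the weighted digraph with weight function `w`;
an edge is present iff its weight is not `⊤`. -/
def IsPath (w : V → V → ℝ≥0∞) (s t : V) (p : List V) : Prop :=
  p ≠ [] ∧ p.head? = some s ∧ p.getLast? = some t ∧ p.Chain' (fun a b => w a b ≠ ⊤)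

/-- The weight of a path: the sum of the weights of its consecutive edges. -/
noncomputable def pWeight (w : V → V → ℝ≥0∞) (p : List V) : ℝ≥0∞ :=
  ((p.zip p.tail).map fun e => w e.1 e.2).sum

/-- The shortest-path distance `d(s,t)` (equal to `⊤` if no path exists). -/
noncomputable def dist (w : V → V → ℝ≥0∞) (s t : V) : ℝ≥0∞ :=
  ⨅ p ∈ {p | IsPath w s t p}, pWeight w p

/-- `p` is a shortest path from `s` to `t`. -/
def IsShortest (w : V → V → ℝ≥0∞) (s t : V) (p : List V) : Prop :=
  IsPath w s t p ∧ pWeight w p = dist w s t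

/-- `σ_{st}`: the number of shortest paths from `s` to `t`. -/
noncomputable def nsp (w : V → V → ℝ≥0∞) (s t : V) : ℕ :=
  Set.ncard {p | IsShortest w s t p}

/-- `σ_{st}(x)`: the number of shortest paths from `s` to `t` passing through `x`. -/
noncomputable def nspVia (w : V → V → ℝ≥0∞) (s t x : V) : ℕ :=
  Set.ncard {p | IsShortest w s t p ∧ x ∈ p}

/-- The directed edge `(a,b)` lies on the path `p`. -/
def edgeOn (p : List V) (a b : V) : Prop := (a, b) ∈ p.zip p.tail

/-- The shortest-path DAG rooted at `s`: the edges lying on shortest paths from `s`. -/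
def dagSet (w : V → V → ℝ≥0∞) (s : V) : Set (V × V) :=
  {e | w e.1 e.2 ≠ ⊤ ∧ dist w s e.1 ≠ ⊤ ∧ dist w s e.1 + w e.1 e.2 = dist w s e.2}

/-!
Lowering the weight of `(u,v)` changes the weight only of paths through `(u,v)`, and can only
decrease distances. A `G'`-shortest path avoiding `(u,v)` therefore has the same weight in `G`,
namely `d'(s,b) ≤ d(s,b)`, so it is shortest in `G`. A `G'`-shortest path through `(u,v)` splits
there into `G'`-shortest pieces `s ⇝ u` and `v ⇝ b`. Since weights are positive, a shortest path
never leaves its target nor re-enters its source, so neither piece uses `(u,v)`, and the first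
argument makes both pieces shortest in `G`.
-/

theorem isChain_iff_forall_mem_zip_tail {R : V → V → Prop} :
    ∀ {p : List V}, p.IsChain R ↔ ∀ e ∈ p.zip p.tail, R e.1 e.2
  | [] => by simp
  | [_] => by simp
  | a :: b :: r => by
    simp [List.isChain_cons_cons, isChain_iff_forall_mem_zip_tail (p := b :: r)]

theorem zip_tail_append {u v : V} : ∀ {p₁ p₂ : List V},
    p₁.getLast? = some u → p₂.head? = some v →
    (p₁ ++ p₂).zip (p₁ ++ p₂).tail = p₁.zip p₁.tail ++ (u, v) :: p₂.zip p₂.tail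
  | [], _, h₁, _ => by simp at h₁
  | [_], [], _, h₂ => by simp at h₂
  | [_], _ :: _, h₁, h₂ => by simp_all
  | x :: y :: r, p₂, h₁, h₂ => by
    have ih := zip_tail_append (p₁ := y :: r) (p₂ := p₂) (by simpa using h₁) h₂
    simp only [List.cons_append, List.tail_cons, List.zip_cons_cons] at ih ⊢
    rw [ih]

theorem edgeOn.exists_append {u v : V} : ∀ {p : List V}, edgeOn p u v →
    ∃ p₁ p₂, p = p₁ ++ p₂ ∧ p₁.getLast? = some u ∧ p₂.head? = some v
  | [], h | [_], h => by simp [edgeOn] at h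
  | a :: c :: r, h => by
    simp only [edgeOn, List.tail_cons, List.zip_cons_cons, List.mem_cons, Prod.mk.injEq] at h
    rcases h with ⟨rfl, rfl⟩ | h
    · exact ⟨[u], v :: r, rfl, rfl, rfl⟩
    · obtain ⟨q₁, q₂, hq, h₁, h₂⟩ := edgeOn.exists_append (p := c :: r) h
      refine ⟨a :: q₁, q₂, by rw [List.cons_append, ← hq], ?_, h₂⟩
      cases q₁ <;> simp_all [List.getLast?_cons]

section Paths

variable {w w' : V → V → ℝ≥0∞} {s t u v : V} {p p₁ p₂ : List V}

theorem pWeight_append (h₁ : p₁.getLast? = some u) (h₂ : p₂.head? = some v) :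
    pWeight w (p₁ ++ p₂) = pWeight w p₁ + w u v + pWeight w p₂ := by
  simp [pWeight, zip_tail_append h₁ h₂, add_assoc]

theorem pWeight_congr_edges (heq : ∀ e ∈ p.zip p.tail, w' e.1 e.2 = w e.1 e.2) :
    pWeight w' p = pWeight w p :=
  congrArg List.sum (List.map_congr_left heq)

theorem IsPath.pWeight_ne_top (hp : IsPath w s t p) : pWeight w p ≠ ⊤ := by
  have hedges := isChain_iff_forall_mem_zip_tail.mp hp.2.2.2
  unfold pWeight
  generalize p.zip p.tail = l at hedges
  induction l <;> simp_all

theorem IsPath.append (h₁ : IsPath w s u p₁) (h₂ : IsPath w v t p₂) (huv : w u v ≠ ⊤) :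
    IsPath w s t (p₁ ++ p₂) := by
  obtain ⟨hne₁, hs, hu, hc₁⟩ := h₁
  obtain ⟨hne₂, hv, ht, hc₂⟩ := h₂
  refine ⟨by simp [hne₁], by simp [List.head?_append, hs], by simp [List.getLast?_append, ht],
    List.isChain_append.mpr ⟨hc₁, hc₂, ?_⟩⟩
  simp_all

theorem IsPath.of_append (hp : IsPath w s t (p₁ ++ p₂)) (h₁ : p₁.getLast? = some u)
    (h₂ : p₂.head? = some v) : IsPath w s u p₁ ∧ w u v ≠ ⊤ ∧ IsPath w v t p₂ := by
  obtain ⟨-, hs, ht, hc⟩ := hp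
  obtain ⟨hc₁, hc₂, hjoin⟩ := List.isChain_append.mp hc
  have hne₁ : p₁ ≠ [] := by rintro rfl; simp at h₁
  have hne₂ : p₂ ≠ [] := by rintro rfl; simp at h₂
  refine ⟨⟨hne₁, ?_, h₁, hc₁⟩, hjoin u h₁ v h₂, ⟨hne₂, h₂, ?_, hc₂⟩⟩
  · cases p₁ <;> simp_all
  · simpa [List.getLast?_append, List.getLast?_eq_none_iff, hne₂] using ht

theorem IsPath.mono (hle : ∀ a b, w' a b ≤ w a b) (hp : IsPath w s t p) : IsPath w' s t p :=
  ⟨hp.1, hp.2.1, hp.2.2.1, hp.2.2.2.imp fun a b h => ne_top_of_le_ne_top h (hle a b)⟩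

theorem IsPath.congr_edges (heq : ∀ e ∈ p.zip p.tail, w' e.1 e.2 = w e.1 e.2)
    (hp : IsPath w' s t p) : IsPath w s t p :=
  ⟨hp.1, hp.2.1, hp.2.2.1, isChain_iff_forall_mem_zip_tail.mpr fun e he =>
    heq e he ▸ isChain_iff_forall_mem_zip_tail.mp hp.2.2.2 e he⟩

theorem dist_le_pWeight (hp : IsPath w s t p) : dist w s t ≤ pWeight w p :=
  iInf₂_le p hp

theorem pWeight_mono (hle : ∀ a b, w' a b ≤ w a b) : pWeight w' p ≤ pWeight w p :=
  List.sum_le_sum fun e _ => hle e.1 e.2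

theorem dist_mono (hle : ∀ a b, w' a b ≤ w a b) : dist w' s t ≤ dist w s t :=
  le_iInf₂ fun _ hq => (dist_le_pWeight (hq.mono hle)).trans (pWeight_mono hle)

theorem dist_le_dist_add_add_dist : dist w s t ≤ dist w s u + w u v + dist w v t := by
  by_cases huv : w u v = ⊤
  · simp [huv]
  simp only [dist, ENNReal.iInf_add, ENNReal.add_iInf]
  refine le_iInf₂ fun p₂ hp₂ => le_iInf₂ fun p₁ hp₁ => ?_
  rw [← pWeight_append hp₁.2.2.1 hp₂.2.1]
  exact dist_le_pWeight (IsPath.append hp₁ hp₂ huv)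

theorem IsShortest.of_append (hp : IsShortest w s t (p₁ ++ p₂)) (h₁ : p₁.getLast? = some u)
    (h₂ : p₂.head? = some v) : IsShortest w s u p₁ ∧ IsShortest w v t p₂ := by
  obtain ⟨hp₁, huv, hp₂⟩ := hp.1.of_append h₁ h₂
  have hsplit : pWeight w p₁ + w u v + pWeight w p₂ ≤ dist w s u + w u v + dist w v t := by
    rw [← pWeight_append h₁ h₂, hp.2]
    exact dist_le_dist_add_add_dist
  refine ⟨⟨hp₁, le_antisymm ?_ (dist_le_pWeight hp₁)⟩,
    ⟨hp₂, le_antisymm ?_ (dist_le_pWeight hp₂)⟩⟩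
  · apply ENNReal.le_of_add_le_add_right (ENNReal.add_ne_top.2 ⟨huv, hp₂.pWeight_ne_top⟩)
    calc pWeight w p₁ + (w u v + pWeight w p₂) ≤ dist w s u + w u v + dist w v t := by
          rw [← add_assoc]; exact hsplit
      _ ≤ dist w s u + (w u v + pWeight w p₂) := by
          rw [add_assoc]; gcongr; exact dist_le_pWeight hp₂
  · apply ENNReal.le_of_add_le_add_left (ENNReal.add_ne_top.2 ⟨hp₁.pWeight_ne_top, huv⟩)
    calc pWeight w p₁ + w u v + pWeight w p₂ ≤ dist w s u + w u v + dist w v t := hsplit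
      _ ≤ pWeight w p₁ + w u v + dist w v t := by gcongr; exact dist_le_pWeight hp₁

theorem IsShortest.not_edgeOn_from_target {b : V} (hp : IsShortest w s t p) (hpos : 0 < w t b) :
    ¬ edgeOn p t b := by
  intro h
  obtain ⟨q₁, q₂, rfl, h₁, h₂⟩ := h.exists_append
  obtain ⟨hq₁, -, -⟩ := hp.1.of_append h₁ h₂
  have hlt : pWeight w q₁ < pWeight w (q₁ ++ q₂) := by
    rw [pWeight_append h₁ h₂, add_assoc]
    exact ENNReal.lt_add_right hq₁.pWeight_ne_top (by simp [hpos.ne'])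
  exact hlt.not_ge (hp.2.trans_le (dist_le_pWeight hq₁))

theorem IsShortest.not_edgeOn_into_source {a : V} (hp : IsShortest w s t p) (hpos : 0 < w a s) :
    ¬ edgeOn p a s := by
  intro h
  obtain ⟨q₁, q₂, rfl, h₁, h₂⟩ := h.exists_append
  obtain ⟨-, -, hq₂⟩ := hp.1.of_append h₁ h₂
  have hlt : pWeight w q₂ < pWeight w (q₁ ++ q₂) := by
    rw [pWeight_append h₁ h₂, add_comm]
    exact ENNReal.lt_add_right hq₂.pWeight_ne_top (by simp [hpos.ne'])
  exact hlt.not_ge (hp.2.trans_le (dist_le_pWeight hq₂))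

theorem IsShortest.of_le_of_eq_on_edges (hle : ∀ a b, w' a b ≤ w a b)
    (heq : ∀ e ∈ p.zip p.tail, w' e.1 e.2 = w e.1 e.2) (hp : IsShortest w' s t p) :
    IsShortest w s t p := by
  have hpath := hp.1.congr_edges heq
  refine ⟨hpath, le_antisymm ?_ (dist_le_pWeight hpath)⟩
  calc pWeight w p = pWeight w' p := (pWeight_congr_edges heq).symm
    _ = dist w' s t := hp.2
    _ ≤ dist w s t := dist_mono hle

end Paths

theorem shortest_path_two_types_general (w w' : V → V → ℝ≥0∞) (u v : V)
    (hpos' : ∀ a b, 0 < w' a b)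
    (hdec : w' u v < w u v)
    (hsame : ∀ a b : V, (a, b) ≠ (u, v) → w' a b = w a b)
    (s b : V) (p : List V) (hp : IsShortest w' s b p) :
    Xor'
      (IsShortest w s b p ∧ ¬ edgeOn p u v)
      (edgeOn p u v ∧ ∃ p₁ p₂ : List V, p = p₁ ++ p₂ ∧
        p₁.getLast? = some u ∧ p₂.head? = some v ∧
        IsShortest w s u p₁ ∧ IsShortest w v b p₂) := by
  have hle : ∀ a c, w' a c ≤ w a c := by
    intro a c
    by_cases h : (a, c) = (u, v)
    · obtain ⟨rfl, rfl⟩ := Prod.mk.inj h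
      exact hdec.le
    · exact (hsame a c h).le
  have transfer {x y : V} {q : List V} (hq : IsShortest w' x y q) (hno : ¬ edgeOn q u v) :
      IsShortest w x y q :=
    hq.of_le_of_eq_on_edges hle fun e he => hsame e.1 e.2 fun h => hno (by rwa [edgeOn, ← h])
  by_cases h : edgeOn p u v
  · obtain ⟨p₁, p₂, rfl, h₁, h₂⟩ := h.exists_append
    obtain ⟨hp₁, hp₂⟩ := hp.of_append h₁ h₂
    exact Or.inr ⟨⟨h, p₁, p₂, rfl, h₁, h₂,
      transfer hp₁ (hp₁.not_edgeOn_from_target (hpos' u v)),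
      transfer hp₂ (hp₂.not_edgeOn_into_source (hpos' u v))⟩, fun hA => hA.2 h⟩
  · exact Or.inl ⟨⟨transfer hp h, h⟩, fun hB => h hB.1⟩

/-- after an incremental edge update on `(u,v)`, every shortest path `p`
from `s` to `b` in `G'` is of exactly one of two types:
(i) `p` is a shortest path from `s` to `b` in `G` and does not use the edge `(u,v)`; or
(ii) `p` contains the edge `(u,v)`, i.e. `p = p₁ ++ p₂` with `p₁` a shortest path from
`s` to `u` in `G` and `p₂` a shortest path from `v` to `b` in `G`. -/
theorem shortest_path_two_types [Fintype V] (w w' : V → V → ℝ≥0∞) (u v : V)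
    (hpos : ∀ a b, 0 < w a b) (hpos' : ∀ a b, 0 < w' a b)
    (hdec : w' u v < w u v)
    (hsame : ∀ a b : V, (a, b) ≠ (u, v) → w' a b = w a b)
    (s b : V) (p : List V) (hp : IsShortest w' s b p) :
    Xor'
      (IsShortest w s b p ∧ ¬ edgeOn p u v)
      (edgeOn p u v ∧ ∃ p₁ p₂ : List V, p = p₁ ++ p₂ ∧
        p₁.getLast? = some u ∧ p₂.head? = some v ∧
        IsShortest w s u p₁ ∧ IsShortest w v b p₂) :=
  shortest_path_two_types_general w w' u v hpos' hdec hsame s b p hp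

end BC
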